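/- Fix b > 0. Let (g_k)_{k ≥ 1} be an i.i.d. sequence of Gamma(b, 1) random variables on a probability space and let ξ = (2π²)⁻¹ ∑_{k=1}^{∞} g_k / (k − 1/2)². Then for every t ≥ 0, the Laplace transform of ξ is E[exp(−tξ)] = (cosh √(t/2))^{−b}. -/

import Mathlib

/-!
The Laplace transform of `g ~ Gamma(b, 1)` is `E[exp(-s g)] = (1 + s)^{-b}` for `s ≥ 0`.
With `s_k = t / (2π²(k + 1/2)²)`, independence turns the Laplace transform of a partial sum
of `t ξ = ∑ s_k g_k` into `∏_{k<n} (1 + s_k)^{-b}`; the series converges a.s. because its mean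
`b ∑ s_k` is finite, and dominated convergence (the integrands lie in `[0, 1]`) passes to the
limit. Finally `∏ (1 + s_k) = cosh √(t/2)`, the product for `cos (πz)` at `z = i√(t/2)/π`, which
follows from Euler's sine product through `cos (πz) = sin (2πz) / (2 sin (πz))`.
-/

open Real MeasureTheory ProbabilityTheory

/-- The Pólya-Gamma `PG(b, 0)` random variable built from an i.i.d. sequence `(g_k)_{k≥1}` of
`Gamma(b, 1)` variables: `ξ = (2π²)⁻¹ ∑_{k=1}^∞ g_k / (k − 1/2)²` (indexing `k − 1` by `ℕ`). -/
noncomputable def polyaGamma {Ω : Type*} (g : ℕ → Ω → ℝ) (ω : Ω) : ℝ :=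
  (2 * π ^ 2)⁻¹ * ∑' k : ℕ, g k ω / ((k : ℝ) + 1/2) ^ 2

open Filter Finset Topology
open scoped ENNReal

namespace Complex

lemma prod_range_two_mul_one_sub_sq_div (z : ℂ) (n : ℕ) :
    ∏ j ∈ range (2 * n), (1 - (2 * z) ^ 2 / ((j : ℂ) + 1) ^ 2) =
      (∏ j ∈ range n, (1 - z ^ 2 / ((j : ℂ) + 1) ^ 2)) *
        ∏ j ∈ range n, (1 - z ^ 2 / ((j : ℂ) + 1 / 2) ^ 2) := by
  induction n with
  | zero => simp
  | succ n ih =>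
    have h_even : (2 * z) ^ 2 / (((2 * n : ℕ) : ℂ) + 1) ^ 2 = z ^ 2 / ((n : ℂ) + 1 / 2) ^ 2 := by
      rw [show ((2 * n : ℕ) : ℂ) + 1 = 2 * ((n : ℂ) + 1 / 2) by push_cast; ring, mul_pow, mul_pow,
        mul_div_mul_left _ _ (by norm_num)]
    have h_odd : (2 * z) ^ 2 / (((2 * n + 1 : ℕ) : ℂ) + 1) ^ 2 = z ^ 2 / ((n : ℂ) + 1) ^ 2 := by
      rw [show ((2 * n + 1 : ℕ) : ℂ) + 1 = 2 * ((n : ℂ) + 1) by push_cast; ring, mul_pow, mul_pow,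
        mul_div_mul_left _ _ (by norm_num)]
    rw [show 2 * (n + 1) = 2 * n + 1 + 1 by ring, prod_range_succ, prod_range_succ, ih, h_even,
      h_odd, prod_range_succ, prod_range_succ]
    ring

theorem tendsto_euler_cos_prod {z : ℂ} (hz : sin (π * z) ≠ 0) :
    Tendsto (fun n : ℕ ↦ ∏ j ∈ range n, (1 - z ^ 2 / ((j : ℂ) + 1 / 2) ^ 2)) atTop
      (𝓝 (cos (π * z))) := by
  set P : ℕ → ℂ := fun n ↦ π * z * ∏ j ∈ range n, (1 - z ^ 2 / ((j : ℂ) + 1) ^ 2)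
  have hP : Tendsto P atTop (𝓝 (sin (π * z))) := tendsto_euler_sin_prod z
  have hP_double := (tendsto_euler_sin_prod (2 * z)).comp
    (tendsto_id.const_mul_atTop' two_pos : Tendsto (fun n : ℕ ↦ 2 * n) atTop atTop)
  have hquot := hP_double.div (hP.const_mul 2) (mul_ne_zero two_ne_zero hz)
  rw [show sin (π * (2 * z)) / (2 * sin (π * z)) = cos (π * z) by
    rw [mul_left_comm, sin_two_mul]; field_simp] at hquot
  refine hquot.congr' ((hP.eventually_ne hz).mono fun n hn ↦ ?_)
  simp only [Pi.div_apply, Function.comp_apply, prod_range_two_mul_one_sub_sq_div]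
  rw [div_eq_iff (mul_ne_zero two_ne_zero hn)]
  ring

end Complex

theorem Real.tendsto_prod_one_add_sq_div_cosh (x : ℝ) :
    Tendsto (fun n : ℕ ↦ ∏ j ∈ range n, (1 + x ^ 2 / (π ^ 2 * ((j : ℝ) + 1 / 2) ^ 2))) atTop
      (𝓝 (cosh x)) := by
  rcases eq_or_ne x 0 with rfl | hx
  · simp
  have hπz : (π : ℂ) * (x * Complex.I / π) = x * Complex.I := by field_simp
  have hsin : Complex.sin (π * (x * Complex.I / π)) ≠ 0 := by
    rw [hπz, Complex.sin_mul_I, ← Complex.ofReal_sinh]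
    exact mul_ne_zero (Complex.ofReal_ne_zero.2 (sinh_ne_zero.2 hx)) Complex.I_ne_zero
  have h := Complex.tendsto_euler_cos_prod hsin
  rw [hπz, Complex.cos_mul_I, ← Complex.ofReal_cosh] at h
  refine tendsto_ofReal_iff.1 (h.congr fun n ↦ ?_)
  push_cast
  refine prod_congr rfl fun j _ ↦ ?_
  field_simp
  rw [Complex.I_sq]
  ring

namespace ProbabilityTheory

@[fun_prop]
lemma measurable_gammaPDF (a r : ℝ) : Measurable (gammaPDF a r) :=
  (measurable_gammaPDFReal a r).ennreal_ofReal

lemma ae_nonneg_gammaMeasure (a r : ℝ) : ∀ᵐ x ∂gammaMeasure a r, 0 ≤ x := by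
  simp only [ae_iff, not_le]
  change gammaMeasure a r (Set.Iio 0) = 0
  rw [gammaMeasure, withDensity_apply _ measurableSet_Iio]
  exact lintegral_gammaPDF_of_nonpos le_rfl

lemma gammaPDF_mul_exp_neg_mul {a r s : ℝ} (hr : 0 < r) (hrs : 0 < r + s) (x : ℝ) :
    gammaPDF a r x * ENNReal.ofReal (exp (-(s * x))) =
      ENNReal.ofReal ((1 + s / r) ^ (-a)) * gammaPDF a (r + s) x := by
  rcases lt_or_ge x 0 with hx | hx
  · simp [gammaPDF_of_neg hx]
  have hrs' : r + s = r * (1 + s / r) := by field_simp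
  have h1 : 0 < 1 + s / r := by rw [one_add_div hr.ne']; positivity
  rw [gammaPDF_of_nonneg hx, gammaPDF_of_nonneg hx, ← ENNReal.ofReal_mul' (exp_pos _).le,
    ← ENNReal.ofReal_mul (by positivity)]
  congr 1
  rw [mul_assoc, ← exp_add, show -(r * x) + -(s * x) = -((r + s) * x) by ring, hrs',
    mul_rpow hr.le h1.le, rpow_neg h1.le]
  field_simp

theorem integral_exp_neg_mul_gammaMeasure {a r s : ℝ} (ha : 0 < a) (hr : 0 < r)
    (hrs : 0 < r + s) :
    ∫ x, exp (-(s * x)) ∂gammaMeasure a r = (1 + s / r) ^ (-a) := by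
  rw [integral_eq_lintegral_of_nonneg_ae (ae_of_all _ fun x ↦ (exp_pos _).le)
    (by fun_prop), gammaMeasure,
    lintegral_withDensity_eq_lintegral_mul _ (by fun_prop) (by fun_prop)]
  simp only [Pi.mul_apply, gammaPDF_mul_exp_neg_mul hr hrs]
  rw [lintegral_const_mul _ (by fun_prop), lintegral_gammaPDF_eq_one ha hrs, mul_one,
    ENNReal.toReal_ofReal (rpow_nonneg (by rw [one_add_div hr.ne']; positivity) _)]

lemma gammaPDF_mul_enorm {a r : ℝ} (ha : 0 < a) (hr : 0 < r) (x : ℝ) :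
    gammaPDF a r x * ‖x‖ₑ = ENNReal.ofReal (a / r) * gammaPDF (a + 1) r x := by
  rcases lt_or_ge x 0 with hx | hx
  · simp [gammaPDF_of_neg hx]
  rw [gammaPDF_of_nonneg hx, gammaPDF_of_nonneg hx, Real.enorm_eq_ofReal hx,
    ← ENNReal.ofReal_mul (by positivity), ← ENNReal.ofReal_mul (by positivity)]
  congr 1
  rw [Gamma_add_one ha.ne', rpow_add_one hr.ne', add_sub_cancel_right]
  rcases hx.eq_or_lt with rfl | hx
  · simp [zero_rpow ha.ne']
  rw [show a = (a - 1) + 1 by ring, rpow_add_one hx.ne', sub_add_cancel]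
  field_simp

theorem eLpNorm_one_id_gammaMeasure {a r : ℝ} (ha : 0 < a) (hr : 0 < r) :
    eLpNorm id 1 (gammaMeasure a r) = ENNReal.ofReal (a / r) := by
  rw [eLpNorm_one_eq_lintegral_enorm, gammaMeasure,
    lintegral_withDensity_eq_lintegral_mul _ (by fun_prop) (by fun_prop)]
  simp only [Pi.mul_apply, id, gammaPDF_mul_enorm ha hr]
  rw [lintegral_const_mul _ (by fun_prop), lintegral_gammaPDF_eq_one (by linarith) hr, mul_one]

variable {Ω : Type*} [MeasurableSpace Ω] {μ : Measure Ω}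

lemma ae_summable_mul_of_map_eq_gammaMeasure {a r : ℝ} (ha : 0 < a) (hr : 0 < r)
    {g : ℕ → Ω → ℝ} (hg : ∀ k, AEMeasurable (g k) μ)
    (hdist : ∀ k, Measure.map (g k) μ = gammaMeasure a r) {s : ℕ → ℝ} (hs : Summable s) :
    ∀ᵐ ω ∂μ, Summable fun k ↦ s k * g k ω := by
  have hL1 (k : ℕ) : eLpNorm (s k • g k) 1 μ = ‖s k‖ₑ * ENNReal.ofReal (a / r) := by
    rw [eLpNorm_const_smul, ← Function.id_comp (g k), ← eLpNorm_map_measure (by fun_prop) (hg k),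
      hdist k, eLpNorm_one_id_gammaMeasure ha hr]
  refine (summable_norm_of_tsum_eLpNorm_ne_top le_rfl
    (fun k ↦ ((hg k).const_smul (s k)).aestronglyMeasurable) ?_).mono fun ω h ↦ h.of_norm
  simp only [hL1, ENNReal.tsum_mul_right]
  exact ENNReal.mul_ne_top (tsum_enorm_ne_top_iff_summable_norm.2 hs.norm) ENNReal.ofReal_ne_top

theorem iIndepFun.tendsto_prod_integral_exp_neg {X : ℕ → Ω → ℝ} (hX : iIndepFun X μ)
    (hmeas : ∀ k, AEMeasurable (X k) μ) (hnonneg : ∀ k, 0 ≤ᵐ[μ] X k)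
    (hsum : ∀ᵐ ω ∂μ, Summable fun k ↦ X k ω) :
    Tendsto (fun n ↦ ∏ k ∈ range n, ∫ ω, exp (-X k ω) ∂μ) atTop
      (𝓝 (∫ ω, exp (-∑' k, X k ω) ∂μ)) := by
  have := hX.isProbabilityMeasure
  have hpartial (n : ℕ) :
      ∫ ω, exp (-∑ k ∈ range n, X k ω) ∂μ = ∏ k ∈ range n, ∫ ω, exp (-X k ω) ∂μ := by
    simpa [mgf, Finset.sum_apply] using hX.mgf_sum₀ hmeas (range n) (t := -1)
  refine (tendsto_integral_of_dominated_convergence (fun _ ↦ 1) (fun n ↦ ?_)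
    (integrable_const 1) (fun n ↦ ?_) ?_).congr hpartial
  · exact (Finset.aemeasurable_fun_sum _ fun k _ ↦ hmeas k).neg.exp.aestronglyMeasurable
  · filter_upwards [ae_all_iff.2 hnonneg] with ω hω
    rw [norm_of_nonneg (exp_pos _).le, exp_le_one_iff, neg_nonpos]
    exact sum_nonneg fun k _ ↦ hω k
  · filter_upwards [hsum] with ω hω
    exact hω.hasSum.tendsto_sum_nat.neg.rexp

end ProbabilityTheory

noncomputable def polyaGammaCoeff (t : ℝ) (k : ℕ) : ℝ :=
  t / (2 * π ^ 2 * ((k : ℝ) + 1 / 2) ^ 2)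

lemma polyaGammaCoeff_nonneg {t : ℝ} (ht : 0 ≤ t) (k : ℕ) : 0 ≤ polyaGammaCoeff t k := by
  unfold polyaGammaCoeff; positivity

lemma summable_polyaGammaCoeff (t : ℝ) : Summable (polyaGammaCoeff t) := by
  refine (((summable_one_div_nat_add_rpow (1 / 2) 2).2 one_lt_two).mul_left
    (t / (2 * π ^ 2))).congr fun k ↦ ?_
  rw [abs_of_pos (by positivity), rpow_two, polyaGammaCoeff]
  field_simp

lemma mul_polyaGamma {Ω : Type*} (g : ℕ → Ω → ℝ) (t : ℝ) (ω : Ω) :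
    t * polyaGamma g ω = ∑' k, polyaGammaCoeff t k * g k ω := by
  rw [polyaGamma, ← mul_assoc, ← tsum_mul_left]
  congr 1 with k
  rw [polyaGammaCoeff]
  field_simp

lemma tendsto_prod_one_add_polyaGammaCoeff {t : ℝ} (ht : 0 ≤ t) :
    Tendsto (fun n ↦ ∏ k ∈ range n, (1 + polyaGammaCoeff t k)) atTop (𝓝 (cosh √(t / 2))) := by
  refine (Real.tendsto_prod_one_add_sq_div_cosh √(t / 2)).congr fun n ↦ prod_congr rfl fun k _ ↦ ?_
  rw [sq_sqrt (by positivity), polyaGammaCoeff]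
  field_simp

theorem polyaGamma_laplace_transform_general {Ω : Type*} [MeasurableSpace Ω] (μ : Measure Ω)
    (b : ℝ) (hb : 0 < b)
    (g : ℕ → Ω → ℝ) (hgmeas : ∀ k, Measurable (g k))
    (hindep : iIndepFun g μ)
    (hdist : ∀ k, Measure.map (g k) μ = gammaMeasure b 1) :
    ∀ t : ℝ, 0 ≤ t →
      ∫ ω, Real.exp (-t * polyaGamma g ω) ∂μ
        = (Real.cosh (Real.sqrt (t / 2))) ^ (-b) := by
  intro t ht
  set s := polyaGammaCoeff t
  have hs : ∀ k, 0 ≤ s k := polyaGammaCoeff_nonneg ht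
  have hg_nonneg (k : ℕ) : ∀ᵐ ω ∂μ, 0 ≤ g k ω :=
    ae_of_ae_map (hgmeas k).aemeasurable (hdist k ▸ ae_nonneg_gammaMeasure b 1)
  have hlaplace (k : ℕ) : ∫ ω, exp (-(s k * g k ω)) ∂μ = (1 + s k) ^ (-b) := by
    rw [← integral_map (f := fun y ↦ exp (-(s k * y))) (hgmeas k).aemeasurable (by fun_prop),
      hdist k, integral_exp_neg_mul_gammaMeasure hb one_pos (by linarith [hs k]), div_one]
  have hlim := (hindep.comp (fun k y ↦ s k * y) fun k ↦ measurable_const_mul (s k))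
    |>.tendsto_prod_integral_exp_neg (fun k ↦ ((hgmeas k).const_mul (s k)).aemeasurable)
      (fun k ↦ (hg_nonneg k).mono fun ω h ↦ mul_nonneg (hs k) h)
      (ae_summable_mul_of_map_eq_gammaMeasure hb one_pos (fun k ↦ (hgmeas k).aemeasurable) hdist
        (summable_polyaGammaCoeff t))
  simp only [Function.comp_apply, hlaplace] at hlim
  simp only [neg_mul, mul_polyaGamma]
  refine tendsto_nhds_unique hlim <| ((tendsto_prod_one_add_polyaGammaCoeff ht).rpow_const
    (Or.inl (cosh_pos _).ne')).congr fun n ↦ ?_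
  exact (finsetProd_rpow _ _ (fun k _ ↦ by linarith [hs k]) _).symm

/-- The Laplace transform of a Pólya-Gamma `PG(b, 0)` random variable: for `b > 0` and `t ≥ 0`,
`E[exp(−tξ)] = (cosh √(t/2))^{−b}`. -/
theorem polyaGamma_laplace_transform {Ω : Type*} [MeasurableSpace Ω] (μ : Measure Ω)
    [IsProbabilityMeasure μ] (b : ℝ) (hb : 0 < b)
    (g : ℕ → Ω → ℝ) (hgmeas : ∀ k, Measurable (g k))
    (hindep : iIndepFun g μ)
    (hdist : ∀ k, Measure.map (g k) μ = gammaMeasure b 1) :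
    ∀ t : ℝ, 0 ≤ t →
      ∫ ω, Real.exp (-t * polyaGamma g ω) ∂μ
        = (Real.cosh (Real.sqrt (t / 2))) ^ (-b) :=
  polyaGamma_laplace_transform_general μ b hb g hgmeas hindep hdist
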